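/- Let l be a convex loss, p = Σ_k π_k p_k a mixture distribution, and for each k let h*_{p_k} minimize L_{p_k} over a hypothesis class H. With weights w_k*(x) = π_k p_k(x)/Σ_i π_i p_i(x), the ensemble satisfies L_p(Σ_k w_k*·h*_{p_k}) ≤ min_{h∈H} L_p(h). -/

import Mathlib

open MeasureTheory Set

/-!
Pointwise, the ensemble is a convex combination of the client models, so Jensen's inequality
bounds its loss by the mixture of the client losses; integrating and using that each client model
is optimal for its own component then bounds this mixture by the loss of any `h ∈ H`.
-/

theorem convexOn_univ_of_jensen_two {f : ℝ → ℝ}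
    (hf : ∀ lam u : Fin 2 → ℝ, (∀ i, 0 ≤ lam i) → ∑ i, lam i = 1 →
      f (∑ i, lam i * u i) ≤ ∑ i, lam i * f (u i)) :
    ConvexOn ℝ univ f := by
  refine ⟨convex_univ, fun s _ t _ a b ha hb hab => ?_⟩
  have hjensen := hf ![a, b] ![s, t] (by simp [Fin.forall_fin_two, ha, hb])
    (by simpa [Fin.sum_univ_two] using hab)
  simpa [Fin.sum_univ_two] using hjensen

theorem ConvexOn.map_sum_div_mul_sum_le {ι : Type*} (s : Finset ι) {f : ℝ → ℝ}
    (hf : ConvexOn ℝ univ f) {a : ι → ℝ} (u : ι → ℝ) (ha : ∀ i ∈ s, 0 ≤ a i) :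
    f (∑ i ∈ s, a i / (∑ j ∈ s, a j) * u i) * ∑ j ∈ s, a j ≤
      ∑ i ∈ s, a i * f (u i) := by
  rcases (Finset.sum_nonneg ha).eq_or_lt with hzero | hpos
  · have hvanish : ∀ i ∈ s, a i = 0 := (Finset.sum_eq_zero_iff_of_nonneg ha).1 hzero.symm
    rw [← hzero, mul_zero]
    exact (Finset.sum_eq_zero fun i hi => by rw [hvanish i hi, zero_mul]).ge
  · have hjensen := hf.map_sum_le (t := s) (w := fun i => a i / ∑ j ∈ s, a j) (p := u)
      (fun i hi => div_nonneg (ha i hi) hpos.le)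
      (by rw [← Finset.sum_div, div_self hpos.ne']) (fun _ _ => mem_univ _)
    calc f (∑ i ∈ s, a i / (∑ j ∈ s, a j) * u i) * ∑ j ∈ s, a j
        ≤ (∑ i ∈ s, a i / (∑ j ∈ s, a j) * f (u i)) * ∑ j ∈ s, a j :=
          mul_le_mul_of_nonneg_right hjensen hpos.le
      _ = ∑ i ∈ s, a i * f (u i) := by
          rw [Finset.sum_mul]
          refine Finset.sum_congr rfl fun i _ => ?_
          field_simp

theorem integral_mul_sum_const_mul {X ι : Type*} [MeasurableSpace X] {μ : Measure X}
    (s : Finset ι) (f : X → ℝ) (c : ι → ℝ) {g : ι → X → ℝ}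
    (hint : ∀ i ∈ s, Integrable (fun x => f x * g i x) μ) :
    ∫ x, f x * ∑ i ∈ s, c i * g i x ∂μ = ∑ i ∈ s, c i * ∫ x, f x * g i x ∂μ := by
  simp_rw [Finset.mul_sum, mul_left_comm (f _)]
  rw [integral_finsetSum s fun i hi => (hint i hi).const_mul (c i)]
  exact Finset.sum_congr rfl fun i _ => integral_const_mul _ _

theorem optimal_ensemble_le_min_loss_general
    {X : Type*} [MeasurableSpace X] (μ : Measure X) (K : ℕ)
    (p : Fin K → X → ℝ) (π : Fin K → ℝ) (y : X → ℝ) (l : ℝ → ℝ → ℝ)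
    (H : Set (X → ℝ)) (hstar : Fin K → X → ℝ)
    (hp : ∀ k x, 0 ≤ p k x) (hπ : ∀ k, 0 ≤ π k)
    (hconv : ∀ (v : ℝ) (n : ℕ) (lam u : Fin n → ℝ), (∀ i, 0 ≤ lam i) → (∑ i, lam i) = 1 →
      l (∑ i, lam i * u i) v ≤ ∑ i, lam i * l (u i) v)
    (hstarH : ∀ k, hstar k ∈ H)
    (hmin : ∀ k, ∀ h ∈ H,
      (∫ x, l (hstar k x) (y x) * p k x ∂μ) ≤ ∫ x, l (h x) (y x) * p k x ∂μ)
    (hint1 : Integrable (fun x =>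
      l (∑ k, (π k * p k x / ∑ i, π i * p i x) * hstar k x) (y x) * (∑ k, π k * p k x)) μ)
    (hint2 : ∀ h ∈ H, ∀ k, Integrable (fun x => l (h x) (y x) * p k x) μ) :
    ∀ h ∈ H,
      (∫ x, l (∑ k, (π k * p k x / ∑ i, π i * p i x) * hstar k x) (y x)
          * (∑ k, π k * p k x) ∂μ)
        ≤ ∫ x, l (h x) (y x) * (∑ k, π k * p k x) ∂μ := by
  intro h hH
  have hconvex : ∀ v, ConvexOn ℝ univ (l · v) :=
    fun v => convexOn_univ_of_jensen_two (hconv v 2)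
  have hpointwise : ∀ x, l (∑ k, (π k * p k x / ∑ i, π i * p i x) * hstar k x) (y x)
      * (∑ k, π k * p k x) ≤ ∑ k, π k * (l (hstar k x) (y x) * p k x) := fun x => by
    convert (hconvex (y x)).map_sum_div_mul_sum_le Finset.univ (fun k => hstar k x)
      (fun k _ => mul_nonneg (hπ k) (hp k x)) using 2 with k
    ring
  calc _ ≤ ∫ x, ∑ k, π k * (l (hstar k x) (y x) * p k x) ∂μ :=
        integral_mono hint1
          (integrable_finsetSum _ fun k _ => (hint2 _ (hstarH k) k).const_mul (π k)) hpointwise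
    _ = ∑ k, π k * ∫ x, l (hstar k x) (y x) * p k x ∂μ := by
        rw [integral_finsetSum _ fun k _ => (hint2 _ (hstarH k) k).const_mul (π k)]
        exact Finset.sum_congr rfl fun k _ => integral_const_mul _ _
    _ ≤ ∑ k, π k * ∫ x, l (h x) (y x) * p k x ∂μ :=
        Finset.sum_le_sum fun k _ => mul_le_mul_of_nonneg_left (hmin k h hH) (hπ k)
    _ = _ := (integral_mul_sum_const_mul _ _ _ fun k _ => hint2 h hH k).symm

/-- Optimal model ensemble: with weights `w_k*(x) = π k * p k x / ∑ i, π i * p i x` and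
client models `hstar k` minimizing `L_{p_k}` over the hypothesis class `H`, the ensemble
satisfies `L_p(∑ k, w_k* · hstar k) ≤ min_{h ∈ H} L_p(h)` for the mixture `p = ∑ k, π k * p k`. -/
theorem optimal_ensemble_le_min_loss
    {X : Type*} [MeasurableSpace X] (μ : Measure X) (K : ℕ)
    (p : Fin K → X → ℝ) (π : Fin K → ℝ) (y : X → ℝ) (l : ℝ → ℝ → ℝ)
    (H : Set (X → ℝ)) (hstar : Fin K → X → ℝ)
    (hp : ∀ k x, 0 ≤ p k x) (hπ : ∀ k, 0 ≤ π k) (hπ1 : ∑ k, π k = 1)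
    (hl : ∀ u v, 0 ≤ l u v)
    (hconv : ∀ (v : ℝ) (n : ℕ) (lam u : Fin n → ℝ), (∀ i, 0 ≤ lam i) → (∑ i, lam i) = 1 →
      l (∑ i, lam i * u i) v ≤ ∑ i, lam i * l (u i) v)
    (hstarH : ∀ k, hstar k ∈ H)
    (hmin : ∀ k, ∀ h ∈ H,
      (∫ x, l (hstar k x) (y x) * p k x ∂μ) ≤ ∫ x, l (h x) (y x) * p k x ∂μ)
    (hint1 : Integrable (fun x =>
      l (∑ k, (π k * p k x / ∑ i, π i * p i x) * hstar k x) (y x) * (∑ k, π k * p k x)) μ)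
    (hint2 : ∀ h ∈ H, ∀ k, Integrable (fun x => l (h x) (y x) * p k x) μ) :
    ∀ h ∈ H,
      (∫ x, l (∑ k, (π k * p k x / ∑ i, π i * p i x) * hstar k x) (y x)
          * (∑ k, π k * p k x) ∂μ)
        ≤ ∫ x, l (h x) (y x) * (∑ k, π k * p k x) ∂μ :=
  optimal_ensemble_le_min_loss_general μ K p π y l H hstar hp hπ hconv hstarH hmin hint1 hint2
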